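/- arXiv:1808.01528 — 2 statements merged into one kernel-verified Lean document; each statement's English description precedes it below -/
import Mathlib

section
/- Fix a nonnegative integer j. For every integer k ≥ 3, every odd positive integer m such that the j-fix of the Thue–Morse word t of length km is not a k-anti-power satisfies m ≤ 3k − 4. In particular Γ_j(k) ≤ 3k − 4 for all k ≥ 3. -/
/-- The Thue–Morse word, 1-indexed: `tm i` is the parity (0 or 1) of the number of 1's
in the binary expansion of `i - 1`. -/
def tm (i : ℕ) : ℕ := ((Nat.digits 2 (i - 1)).sum) % 2

/-- The `r`-th block (0-indexed) of size `m` of the `j`-fix of the Thue–Morse word: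
the factor `⟨j + r*m + 1, j + (r+1)*m⟩`. -/
def tmBlock (j m r : ℕ) : List ℕ := (List.range m).map fun i => tm (j + r * m + i + 1)

/-- The `j`-fix of the Thue–Morse word of length `k*m` is a `k`-anti-power, i.e. the
`k` blocks `⟨j + r*m + 1, j + (r+1)*m⟩` for `0 ≤ r ≤ k-1` are pairwise distinct. -/
def IsAntipowerJfix (j k m : ℕ) : Prop :=
  ∀ r₁ < k, ∀ r₂ < k, tmBlock j m r₁ = tmBlock j m r₂ → r₁ = r₂

/-- `gammaJ j k` is the least positive integer `m` such that the `j`-fix of the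
Thue–Morse word of length `k*m` is a `k`-anti-power. -/
noncomputable def gammaJ (j k : ℕ) : ℕ := sInf {m : ℕ | 0 < m ∧ IsAntipowerJfix j k m}

/-- `KJ j m` is the least positive integer `k` such that the `j`-fix of the
Thue–Morse word of length `k*m` is not a `k`-anti-power. -/
noncomputable def KJ (j m : ℕ) : ℕ := sInf {k : ℕ | 0 < k ∧ ¬ IsAntipowerJfix j k m}

/-- `GammaJ j k` is the supremum (in `ℕ`, with `sSup ∅ = 0` and `sSup` of an unbounded
set `= 0`) of the set of odd positive integers `m` such that the `j`-fix of the
Thue–Morse word of length `k*m` is not a `k`-anti-power. -/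
noncomputable def GammaJ (j k : ℕ) : ℕ := sSup {m : ℕ | Odd m ∧ ¬ IsAntipowerJfix j k m}


/- ### Auxiliary machinery ### -/

def u (n : ℕ) : ℕ := ((Nat.digits 2 n).sum) % 2

lemma u_lt (n : ℕ) : u n < 2 := Nat.mod_lt _ (by norm_num)

lemma u_even (n : ℕ) : u (2 * n) = u n := by
  rcases Nat.eq_zero_or_pos n with h | h
  · simp [h]
  · unfold u
    rw [Nat.digits_def' (by norm_num : (1:ℕ) < 2) (by omega : 0 < 2 * n)]
    simp [Nat.mul_div_cancel_left _ (by norm_num : (0:ℕ) < 2), Nat.mul_mod_right]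

lemma u_odd (n : ℕ) : u (2 * n + 1) = (u n + 1) % 2 := by
  unfold u
  rw [Nat.digits_def' (by norm_num : (1:ℕ) < 2) (by omega : 0 < 2 * n + 1)]
  have h1 : (2 * n + 1) % 2 = 1 := by omega
  have h2 : (2 * n + 1) / 2 = n := by omega
  rw [h1, h2]
  simp [List.sum_cons]
  omega

/-- Thue–Morse has no three equal consecutive letters. -/
lemma no_three (n : ℕ) (h1 : u n = u (n + 1)) (h2 : u (n + 1) = u (n + 2)) : False := by
  rcases Nat.even_or_odd n with ⟨e, he⟩ | ⟨e, he⟩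
  · have ha : u n = u e := by rw [he, ← two_mul]; exact u_even e
    have hb : u (n + 1) = (u e + 1) % 2 := by
      rw [he, ← two_mul]; exact u_odd e
    have := u_lt e
    omega
  · have ha : u (n + 1) = u (e + 1) := by
      have : n + 1 = 2 * (e + 1) := by omega
      rw [this]; exact u_even (e + 1)
    have hb : u (n + 2) = (u (e + 1) + 1) % 2 := by
      have : n + 2 = 2 * (e + 1) + 1 := by omega
      rw [this]; exact u_odd (e + 1)
    have := u_lt (e + 1)
    omega

/-- No window of length 4 matches at positions of opposite parity. -/
lemma odd_dist (c d : ℕ) (h : ∀ i < 4, u (2 * c + i) = u (2 * d + 1 + i)) : False := by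
  have e0 := h 0 (by norm_num)
  have e1 := h 1 (by norm_num)
  have e2 := h 2 (by norm_num)
  have e3 := h 3 (by norm_num)
  rw [show 2 * c + 0 = 2 * c by ring, u_even, show 2 * d + 1 + 0 = 2 * d + 1 by ring,
    u_odd] at e0
  rw [show 2 * c + 1 = 2 * c + 1 by ring, u_odd, show 2 * d + 1 + 1 = 2 * (d + 1) by ring,
    u_even] at e1
  rw [show 2 * c + 2 = 2 * (c + 1) by ring, u_even, show 2 * d + 1 + 2 = 2 * (d + 1) + 1 by ring,
    u_odd] at e2
  rw [show 2 * c + 3 = 2 * (c + 1) + 1 by ring, u_odd, show 2 * d + 1 + 3 = 2 * (d + 2) by ring,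
    u_even] at e3
  have hd1 : u d = u (d + 1) := by
    have := u_lt c; have := u_lt d; have := u_lt (d + 1); omega
  have hd2 : u (d + 1) = u (d + 2) := by
    have := u_lt (c + 1); have := u_lt (d + 1); have := u_lt (d + 2); omega
  exact no_three d hd1 hd2

/-- No window of length ≥ 4 matches at odd distance. -/
lemma odd_window (a D L : ℕ) (hD : Odd D) (hL : 4 ≤ L)
    (h : ∀ i < L, u (a + i) = u (a + D + i)) : False := by
  rcases Nat.even_or_odd a with ⟨c, hc⟩ | ⟨c, hc⟩
  · obtain ⟨e, he⟩ := hD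
    refine odd_dist c (c + e) ?_
    intro i hi
    have := h i (by omega)
    have h1 : 2 * c + i = a + i := by omega
    have h2 : 2 * (c + e) + 1 + i = a + D + i := by omega
    rw [h1, h2]; exact this
  · obtain ⟨e, he⟩ := hD
    refine odd_dist (c + e + 1) c ?_
    intro i hi
    have := h i (by omega)
    have h1 : 2 * (c + e + 1) + i = a + D + i := by omega
    have h2 : 2 * c + 1 + i = a + i := by omega
    rw [h1, h2]; exact this.symm

/-- Halving a matching window at even distance. -/
lemma half (a D L : ℕ) (h : ∀ i < L, u (a + i) = u (a + 2 * D + i)) :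
    ∀ i < (L + 1) / 2, u (a / 2 + i) = u (a / 2 + D + i) := by
  intro i hi
  set q := a / 2 + i with hq
  rcases le_or_gt a (2 * q) with hle | hlt
  · -- even position 2q inside the window
    have hw : 2 * q - a < L := by omega
    have := h (2 * q - a) hw
    have h1 : a + (2 * q - a) = 2 * q := by omega
    have h2 : a + 2 * D + (2 * q - a) = 2 * (q + D) := by omega
    rw [h1, h2, u_even, u_even, show q + D = a / 2 + D + i by omega] at this
    exact this
  · -- a = 2q+1, use odd position 2q+1
    have ha : a = 2 * q + 1 := by omega
    have hw : (0 : ℕ) < L := by omega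
    have := h 0 hw
    have h1 : a + 0 = 2 * q + 1 := by omega
    have h2 : a + 2 * D + 0 = 2 * (q + D) + 1 := by omega
    rw [h1, h2, u_odd, u_odd, show q + D = a / 2 + D + i by omega] at this
    have := u_lt q; have := u_lt (a / 2 + D + i)
    omega

lemma main_window (v : ℕ) : ∀ a D L : ℕ, Odd D →
    (∀ i < L, u (a + i) = u (a + 2 ^ v * D + i)) → L ≤ 3 * 2 ^ v := by
  induction v with
  | zero =>
    intro a D L hD h
    by_contra hc
    refine odd_window a D L hD (by omega) ?_
    intro i hi
    have := h i hi
    rwa [show 2 ^ 0 * D = D by ring] at this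
  | succ v ih =>
    intro a D L hD h
    have h' : ∀ i < L, u (a + i) = u (a + 2 * (2 ^ v * D) + i) := by
      intro i hi
      have := h i hi
      rwa [show 2 ^ (v + 1) * D = 2 * (2 ^ v * D) by ring] at this
    have h2 := half a (2 ^ v * D) L h'
    have h3 : ∀ i < (L + 1) / 2, u (a / 2 + i) = u (a / 2 + 2 ^ v * D + i) := h2
    have := ih (a / 2) D ((L + 1) / 2) hD h3
    have hpow : 3 * 2 ^ (v + 1) = 2 * (3 * 2 ^ v) := by ring
    omega

lemma tm_succ (x : ℕ) : tm (x + 1) = u x := by simp [tm, u]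

/-- Extract pointwise equality from equal blocks. -/
lemma block_eq_pointwise {j m r₁ r₂ : ℕ} (h : tmBlock j m r₁ = tmBlock j m r₂) :
    ∀ i < m, tm (j + r₁ * m + i + 1) = tm (j + r₂ * m + i + 1) := by
  intro i hi
  have := congrArg (fun l : List ℕ => l[i]?) h
  simp only [tmBlock, List.getElem?_map, List.getElem?_range, hi, if_pos] at this
  simpa using this

lemma two_blocks_bound (j k m : ℕ) (hk : 3 ≤ k) (hmo : Odd m)
    (r₁ r₂ : ℕ) (h1 : r₁ < r₂) (h2 : r₂ < k)
    (heq : tmBlock j m r₁ = tmBlock j m r₂) : m ≤ 3 * k - 4 := by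
  set s := r₂ - r₁ with hs
  have hs0 : s ≠ 0 := by omega
  obtain ⟨v, D₀, hD₀, hsv⟩ := Nat.exists_eq_two_pow_mul_odd hs0
  have hwin : ∀ i < m, u (j + r₁ * m + i) = u (j + r₁ * m + 2 ^ v * (D₀ * m) + i) := by
    intro i hi
    have := block_eq_pointwise heq i hi
    rw [show j + r₁ * m + i + 1 = (j + r₁ * m + i) + 1 by ring, tm_succ,
      show j + r₂ * m + i + 1 = (j + r₂ * m + i) + 1 by ring, tm_succ] at this
    have harith : j + r₂ * m + i = j + r₁ * m + 2 ^ v * (D₀ * m) + i := by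
      have : r₂ * m = r₁ * m + s * m := by
        have hmm : r₁ * m ≤ r₂ * m := Nat.mul_le_mul_right m (le_of_lt h1)
        rw [hs, Nat.sub_mul]; omega
      rw [this, hsv]; ring
    rwa [harith] at this
  have hDodd : Odd (D₀ * m) := hD₀.mul hmo
  have hbound := main_window v _ _ _ hDodd hwin
  have hle : 2 ^ v ≤ s := by
    rw [hsv]
    have : 1 ≤ D₀ := hD₀.pos
    exact Nat.le_mul_of_pos_right _ (by omega)
  have hsk : s ≤ k - 1 := by omega
  have hm2 : m % 2 = 1 := Nat.odd_iff.mp hmo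
  rcases Nat.eq_zero_or_pos v with hv | hv
  · subst hv; simp at hbound; omega
  · obtain ⟨w, hw⟩ : ∃ w, v = w + 1 := ⟨v - 1, by omega⟩
    have h2w : 2 ^ v = 2 * 2 ^ w := by rw [hw]; ring
    omega

theorem Gamma_le_three_k_sub_four (j k : ℕ) (hk : 3 ≤ k) :
    (∀ m : ℕ, Odd m → 0 < m → ¬ IsAntipowerJfix j k m → m ≤ 3 * k - 4) ∧
    GammaJ j k ≤ 3 * k - 4 := by
  have hmain : ∀ m : ℕ, Odd m → 0 < m → ¬ IsAntipowerJfix j k m → m ≤ 3 * k - 4 := by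
    intro m hmo hm hna
    unfold IsAntipowerJfix at hna
    push_neg at hna
    obtain ⟨r₁, hr₁, r₂, hr₂, heq, hne⟩ := hna
    rcases lt_trichotomy r₁ r₂ with h | h | h
    · exact two_blocks_bound j k m hk hmo r₁ r₂ h hr₂ heq
    · exact absurd h hne
    · exact two_blocks_bound j k m hk hmo r₂ r₁ h hr₁ heq.symm
  refine ⟨hmain, ?_⟩
  apply csSup_le'
  rintro m ⟨hmo, hna⟩
  exact hmain m hmo hmo.pos hna
end

section
/- For every nonnegative integer j, the liminf as k → ∞ of Γ_j(k)/k equals 3/2 (limit taken over positive integers k, with Γ_j(k)/k a real number). -/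
def sg (n : ℕ) : ZMod 2 := ((Nat.digits 2 n).sum : ZMod 2)

lemma sg_two_mul (n : ℕ) : sg (2 * n) = sg n := by
  rcases Nat.eq_zero_or_pos n with h | h
  · simp [h]
  · unfold sg
    rw [Nat.digits_def' (by norm_num : 1 < 2) (by omega)]
    simp [Nat.mul_div_cancel_left, Nat.mul_mod_right]

lemma sg_two_mul_add_one (n : ℕ) : sg (2 * n + 1) = sg n + 1 := by
  unfold sg
  rw [Nat.digits_def' (by norm_num : 1 < 2) (by omega)]
  have h1 : (2 * n + 1) % 2 = 1 := by omega
  have h2 : (2 * n + 1) / 2 = n := by omega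
  rw [h1, h2]
  push_cast [List.sum_cons]
  ring

lemma tm_succ_s4 (n : ℕ) : tm (n + 1) = (sg n).val := by
  unfold tm sg
  simp only [Nat.add_sub_cancel]
  rw [ZMod.val_natCast]

lemma tm_eq_iff (a b : ℕ) : tm (a + 1) = tm (b + 1) ↔ sg a = sg b := by
  rw [tm_succ_s4, tm_succ_s4]
  exact ⟨fun h => ZMod.val_injective 2 h, fun h => by rw [h]⟩

lemma zmod2_ne (a b : ZMod 2) (h : a ≠ b) : a = b + 1 := by revert h; revert a b; decide

lemma zmod2_self_ne (a : ZMod 2) : a ≠ a + 1 := by revert a; decide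

lemma no_triple (n : ℕ) : ¬ (sg n = sg (n + 1) ∧ sg (n + 1) = sg (n + 2)) := by
  rcases Nat.even_or_odd n with ⟨h, hh⟩ | ⟨h, hh⟩
  · intro ⟨h1, _⟩
    rw [show n = 2 * h by omega, show 2 * h + 1 = 2 * h + 1 from rfl,
      sg_two_mul, sg_two_mul_add_one] at h1
    exact zmod2_self_ne _ h1
  · intro ⟨_, h2⟩
    rw [show n + 1 = 2 * (h + 1) by omega, show n + 2 = 2 * (h + 1) + 1 by omega,
      sg_two_mul, sg_two_mul_add_one] at h2
    exact zmod2_self_ne _ h2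

/-- Agreement run: `sg` agrees with its shift by `D` on `[a, a+L)`. -/
def Agree (D a L : ℕ) : Prop := ∀ i < L, sg (a + i + D) = sg (a + i)


lemma z2 {x y : ZMod 2} (h : x + 1 = y) : x = y + 1 := by revert h; revert x y; decide

lemma z3 (x : ZMod 2) : x + 1 + 1 = x := by revert x; decide

lemma agree_odd (c a L : ℕ) (hc : Odd c) (h : Agree c a L) : L ≤ 3 := by
  by_contra hL
  push_neg at hL
  obtain ⟨E, hE⟩ := hc
  have h0 := h 0 (by omega)
  have h1 := h 1 (by omega)
  have h2 := h 2 (by omega)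
  have h3 := h 3 (by omega)
  rcases Nat.even_or_odd a with ⟨y, hy⟩ | ⟨y, hy⟩
  · rw [show a + 0 + c = 2 * (y + E) + 1 by omega, show a + 0 = 2 * y by omega,
      sg_two_mul_add_one, sg_two_mul] at h0
    rw [show a + 1 + c = 2 * (y + E + 1) by omega, show a + 1 = 2 * y + 1 by omega,
      sg_two_mul, sg_two_mul_add_one] at h1
    rw [show a + 2 + c = 2 * (y + E + 1) + 1 by omega, show a + 2 = 2 * (y + 1) by omega,
      sg_two_mul_add_one, sg_two_mul] at h2
    rw [show a + 3 + c = 2 * (y + E + 2) by omega, show a + 3 = 2 * (y + 1) + 1 by omega,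
      sg_two_mul, sg_two_mul_add_one] at h3
    have ha : sg (y + E) = sg y + 1 := z2 h0
    have hc' : sg (y + E + 2) = sg y + 1 := by rw [h3, ← h2, h1, z3]
    exact no_triple (y + E) ⟨by rw [ha, h1], by rw [h1, hc']⟩
  · rw [show a + 0 + c = 2 * (y + E + 1) by omega, show a + 0 = 2 * y + 1 by omega,
      sg_two_mul, sg_two_mul_add_one] at h0
    rw [show a + 1 + c = 2 * (y + E + 1) + 1 by omega, show a + 1 = 2 * (y + 1) by omega,
      sg_two_mul_add_one, sg_two_mul] at h1
    rw [show a + 2 + c = 2 * (y + E + 2) by omega, show a + 2 = 2 * (y + 1) + 1 by omega,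
      sg_two_mul, sg_two_mul_add_one] at h2
    rw [show a + 3 + c = 2 * (y + E + 2) + 1 by omega, show a + 3 = 2 * (y + 2) by omega,
      sg_two_mul_add_one, sg_two_mul] at h3
    have hb : sg (y + 1) = sg y := by rw [← h1, h0, z3]
    have hcc : sg (y + 2) = sg y := by rw [← h3, h2, hb, z3]
    exact no_triple y ⟨hb.symm, by rw [hb, hcc]⟩

/-- Key upper bound: an agreement run for shift `2^w * c` (`c` odd) has length at most `3 * 2^w`. -/
lemma agree_le (w : ℕ) : ∀ c a L : ℕ, Odd c → Agree (2 ^ w * c) a L → L ≤ 3 * 2 ^ w := by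
  induction w with
  | zero =>
    intro c a L hc h
    simpa using agree_odd c a L hc (by simpa using h)
  | succ w ih =>
    intro c a L hc h
    rcases Nat.eq_zero_or_pos L with h0 | hLpos
    · omega
    set L' := (a + L - 1) / 2 - a / 2 + 1 with hL'
    have key : Agree (2 ^ w * c) (a / 2) L' := by
      intro i hi
      set y := a / 2 + i with hy
      have hy2 : 2 * y ≤ a + L - 1 := by omega
      rcases Nat.lt_or_ge (2 * y) a with hlt | hge
      · -- use x = 2y+1 = a
        have hx : 2 * y + 1 = a := by omega
        have := h 0 (by omega)
        rw [show a + 0 + 2 ^ (w + 1) * c = 2 * (y + 2 ^ w * c) + 1 by rw [← hx, pow_succ]; ring,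
          show a + 0 = 2 * y + 1 by omega, sg_two_mul_add_one, sg_two_mul_add_one] at this
        have := add_right_cancel this
        simpa using this
      · have hxa : a ≤ 2 * y := hge
        have := h (2 * y - a) (by omega)
        rw [show a + (2 * y - a) + 2 ^ (w + 1) * c = 2 * (y + 2 ^ w * c) by rw [show a + (2 * y - a) = 2 * y from by omega, pow_succ]; ring,
          show a + (2 * y - a) = 2 * y by omega, sg_two_mul, sg_two_mul] at this
        exact this
    have hL' : L' ≤ 3 * 2 ^ w := ih c (a / 2) L' hc key
    have : L ≤ 2 * L' := by omega
    calc L ≤ 2 * L' := this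
    _ ≤ 2 * (3 * 2 ^ w) := by omega
    _ = 3 * 2 ^ (w + 1) := by ring




lemma tmBlock_eq_iff (j m r₁ r₂ : ℕ) :
    tmBlock j m r₁ = tmBlock j m r₂ ↔ ∀ i < m, sg (j + r₁ * m + i) = sg (j + r₂ * m + i) := by
  unfold tmBlock
  constructor
  · intro h i hi
    have := congrArg (fun l => l[i]?) h
    simp only [List.getElem?_map, List.getElem?_range hi] at this
    rw [← tm_eq_iff]
    simpa using this
  · intro h
    apply List.ext_get
    · simp
    · intro i hi1 hi2
      simp only [List.get_eq_getElem, List.getElem_map, List.getElem_range]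
      have hi : i < m := by simpa using hi1
      rw [tm_eq_iff]
      exact h i hi

lemma not_anti_of (j m r₁ r₂ k : ℕ) (h12 : r₁ < r₂) (h2k : r₂ < k)
    (heq : tmBlock j m r₁ = tmBlock j m r₂) : ¬ IsAntipowerJfix j k m :=
  fun H => absurd (H r₁ (by omega) r₂ h2k heq) (by omega)

/-- From a failure of the antipower property, extract an agreement run and the dyadic bound. -/
lemma bound_of_not_anti (j k m : ℕ) (hm : Odd m) (h : ¬ IsAntipowerJfix j k m) :
    ∃ w d : ℕ, 0 < d ∧ d < k ∧ 2 ^ w ≤ d ∧ m ≤ 3 * 2 ^ w := by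
  unfold IsAntipowerJfix at h
  push_neg at h
  obtain ⟨r₁, hr₁, r₂, hr₂, heq, hne⟩ := h
  -- wlog r₁ < r₂
  obtain ⟨s₁, s₂, hs12, hs2, hseq⟩ : ∃ s₁ s₂, s₁ < s₂ ∧ s₂ < k ∧
      tmBlock j m s₁ = tmBlock j m s₂ := by
    rcases lt_or_gt_of_ne hne with hlt | hgt
    · exact ⟨r₁, r₂, hlt, hr₂, heq⟩
    · exact ⟨r₂, r₁, hgt, hr₁, heq.symm⟩
  set d := s₂ - s₁ with hd
  have hs₂ : s₂ = s₁ + d := by omega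
  have hagree : Agree (d * m) (j + s₁ * m) m := by
    intro i hi
    rw [tmBlock_eq_iff] at hseq
    have := (hseq i hi).symm
    rw [hs₂] at this
    rw [show j + (s₁ + d) * m + i = j + s₁ * m + i + d * m by ring] at this
    exact this
  have hd0 : d ≠ 0 := by omega
  obtain ⟨w, c, hcodd, hdc⟩ := Nat.exists_eq_two_pow_mul_odd hd0
  have hagree' : Agree (2 ^ w * (c * m)) (j + s₁ * m) m := by
    rw [show 2 ^ w * (c * m) = d * m by rw [hdc]; ring]
    exact hagree
  have hmle : m ≤ 3 * 2 ^ w := agree_le w (c * m) (j + s₁ * m) m (hcodd.mul hm) hagree'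
  have hc1 : 1 ≤ c := by
    rcases Nat.eq_zero_or_pos c with h0 | h1
    · simp [h0] at hcodd
    · exact h1
  have h2wd : 2 ^ w ≤ d := by
    calc 2 ^ w = 2 ^ w * 1 := by ring
    _ ≤ 2 ^ w * c := Nat.mul_le_mul_left _ hc1
    _ = d := hdc.symm
  exact ⟨w, d, by omega, by omega, h2wd, hmle⟩

lemma mem_S_le (j k m : ℕ) (hm : Odd m ∧ ¬ IsAntipowerJfix j k m) : m ≤ 3 * k := by
  obtain ⟨w, d, hd0, hdk, hwd, hm3⟩ := bound_of_not_anti j k m hm.1 hm.2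
  calc m ≤ 3 * 2 ^ w := hm3
  _ ≤ 3 * d := by omega
  _ ≤ 3 * k := by omega

lemma GammaJ_le_pow (j n : ℕ) : GammaJ j (2 ^ (n + 1)) ≤ 3 * 2 ^ n := by
  unfold GammaJ
  rcases Set.eq_empty_or_nonempty {m : ℕ | Odd m ∧ ¬ IsAntipowerJfix j (2 ^ (n + 1)) m} with he | hne
  · rw [he, csSup_empty]
    exact Nat.zero_le _
  · apply csSup_le hne
    intro m hm
    obtain ⟨w, d, hd0, hdk, hwd, hm3⟩ := bound_of_not_anti j (2 ^ (n + 1)) m hm.1 hm.2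
    have h2w : 2 ^ w < 2 ^ (n + 1) := by omega
    have hwn : w ≤ n := by
      by_contra hcon
      push_neg at hcon
      have : 2 ^ (n + 1) ≤ 2 ^ w := Nat.pow_le_pow_right (by norm_num) hcon
      omega
    calc m ≤ 3 * 2 ^ w := hm3
    _ ≤ 3 * 2 ^ n := by
        have : (2:ℕ) ^ w ≤ 2 ^ n := Nat.pow_le_pow_right (by norm_num) hwn
        omega

lemma GammaJ_le (j k : ℕ) : GammaJ j k ≤ 3 * k := by
  unfold GammaJ
  rcases Set.eq_empty_or_nonempty {m : ℕ | Odd m ∧ ¬ IsAntipowerJfix j k m} with he | hne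
  · rw [he, csSup_empty]; exact Nat.zero_le _
  · exact csSup_le hne fun m hm => mem_S_le j k m hm

lemma sg8p2 (x : ℕ) : sg (8 * x + 2) = sg x + 1 := by
  rw [show 8 * x + 2 = 2 * (2 * (2 * x) + 1) by ring, sg_two_mul, sg_two_mul_add_one, sg_two_mul]

lemma sg8p3 (x : ℕ) : sg (8 * x + 3) = sg x := by
  rw [show 8 * x + 3 = 2 * (2 * (2 * x) + 1) + 1 by ring, sg_two_mul_add_one,
    sg_two_mul_add_one, sg_two_mul, z3]

lemma sg8p4 (x : ℕ) : sg (8 * x + 4) = sg x + 1 := by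
  rw [show 8 * x + 4 = 2 * (2 * (2 * x + 1)) by ring, sg_two_mul, sg_two_mul,
    sg_two_mul_add_one]

lemma sg8p5 (x : ℕ) : sg (8 * x + 5) = sg x := by
  rw [show 8 * x + 5 = 2 * (2 * (2 * x + 1)) + 1 by ring, sg_two_mul_add_one, sg_two_mul,
    sg_two_mul_add_one, z3]

/-- The basic triple: if `sg (t+u) ≠ sg t` then `sg` agrees with its shift by `8u+1`
on the three positions `8t+2, 8t+3, 8t+4`. -/
lemma triple_agree (t u : ℕ) (h : sg (t + u) ≠ sg t) : Agree (8 * u + 1) (8 * t + 2) 3 := by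
  have key : sg (t + u) = sg t + 1 := zmod2_ne _ _ h
  intro i hi
  interval_cases i
  · rw [show 8 * t + 2 + 0 + (8 * u + 1) = 8 * (t + u) + 3 by ring,
      show 8 * t + 2 + 0 = 8 * t + 2 by ring, sg8p3, sg8p2, key]
  · rw [show 8 * t + 2 + 1 + (8 * u + 1) = 8 * (t + u) + 4 by ring,
      show 8 * t + 2 + 1 = 8 * t + 3 by ring, sg8p4, sg8p3, key, z3]
  · rw [show 8 * t + 2 + 2 + (8 * u + 1) = 8 * (t + u) + 5 by ring,
      show 8 * t + 2 + 2 = 8 * t + 4 by ring, sg8p5, sg8p4, key]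

lemma agree_double (c q L : ℕ) (h : Agree c q L) : Agree (2 * c) (2 * q) (2 * L) := by
  intro i hi
  rcases Nat.even_or_odd i with ⟨i', hi'⟩ | ⟨i', hi'⟩
  · rw [show 2 * q + i + 2 * c = 2 * (q + i' + c) by omega,
      show 2 * q + i = 2 * (q + i') by omega, sg_two_mul, sg_two_mul]
    exact h i' (by omega)
  · rw [show 2 * q + i + 2 * c = 2 * (q + i' + c) + 1 by omega,
      show 2 * q + i = 2 * (q + i') + 1 by omega, sg_two_mul_add_one, sg_two_mul_add_one,
      h i' (by omega)]

lemma agree_pow (c q L v : ℕ) (h : Agree c q L) :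
    Agree (2 ^ v * c) (2 ^ v * q) (2 ^ v * L) := by
  induction v with
  | zero => simpa using h
  | succ v ih =>
    have := agree_double (2 ^ v * c) (2 ^ v * q) (2 ^ v * L) ih
    rw [show 2 * (2 ^ v * c) = 2 ^ (v + 1) * c by ring,
      show 2 * (2 ^ v * q) = 2 ^ (v + 1) * q by ring,
      show 2 * (2 ^ v * L) = 2 ^ (v + 1) * L by ring] at this
    exact this

/-- Core construction: equality of two blocks at distance `2^v`. -/
lemma blocks_eq_core (j v m t u r : ℕ) (hm : m = 8 * u + 1) (hσ : sg (t + u) ≠ sg t)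
    (h1 : 2 ^ v * (8 * t + 2) ≤ j + r * m)
    (h2 : j + r * m + m ≤ 2 ^ v * (8 * t + 2) + 3 * 2 ^ v) :
    tmBlock j m r = tmBlock j m (r + 2 ^ v) := by
  rw [tmBlock_eq_iff]
  intro i hi
  have hrun : Agree (2 ^ v * (8 * u + 1)) (2 ^ v * (8 * t + 2)) (2 ^ v * 3) :=
    agree_pow _ _ _ v (triple_agree t u hσ)
  set A := 2 ^ v * (8 * t + 2) with hA
  set x := j + r * m + i with hx
  have hx1 : A ≤ x := by omega
  have hx2 : x < A + 2 ^ v * 3 := by omega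
  have := hrun (x - A) (by omega)
  rw [show A + (x - A) = x by omega] at this
  rw [show j + (r + 2 ^ v) * m + i = x + 2 ^ v * m by rw [hx]; ring]
  rw [hm]
  exact this.symm


/-- Selection lemma: find a suitable `m ≈ M` (with `m = 8u+1`) and `t` so that the block
window condition holds with `r = R`. -/
lemma select (j v R M : ℕ) (hR : 64 ≤ R) (hRd : R ∣ 2 ^ v)
    (hM1 : M + 24 * R ≤ 3 * 2 ^ v) (hM2 : 2 ^ v ≤ M) :
    ∃ m u t : ℕ, m = 8 * u + 1 ∧ M ≤ m + 8 * (2 ^ v / R) + 33 ∧ m + 2 ≤ M ∧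
      sg (t + u) ≠ sg t ∧ 2 ^ v * (8 * t + 2) ≤ j + R * m ∧
      j + R * m + m ≤ 2 ^ v * (8 * t + 2) + 3 * 2 ^ v := by
  obtain ⟨Q, hQdef⟩ : ∃ x, x = 2 ^ v := ⟨_, rfl⟩
  rw [← hQdef] at hM1 hM2 ⊢
  obtain ⟨QR, hQRdef⟩ : ∃ x, x = Q / R := ⟨_, rfl⟩
  have hQR : R * QR = Q := by
    rw [hQRdef, mul_comm]
    exact Nat.div_mul_cancel (hQdef ▸ hRd)
  have hRQR : 64 * QR ≤ Q := by
    calc 64 * QR ≤ R * QR := Nat.mul_le_mul_right QR hR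
    _ = Q := hQR
  have hQbig : 12 * R ≤ Q := by omega
  obtain ⟨u₀, hu₀def⟩ : ∃ x, x = (M - (8 * QR + 26)) / 8 := ⟨_, rfl⟩
  obtain ⟨m₀, hm₀def⟩ : ∃ x, x = 8 * u₀ + 1 := ⟨_, rfl⟩
  have hu₀ : 8 * u₀ ≤ M - (8 * QR + 26) ∧ M - (8 * QR + 26) < 8 * u₀ + 8 := by
    rw [hu₀def]; omega
  have hm₀M : m₀ + 8 * QR + 25 ≤ M ∧ M ≤ m₀ + 8 * QR + 33 := by omega
  have hm₀big : Q / 2 ≤ m₀ := by omega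
  have hP1 : 2 * Q ≤ R * m₀ := by
    calc 2 * Q ≤ 64 * (Q / 2) := by omega
    _ ≤ R * m₀ := Nat.mul_le_mul hR hm₀big
  obtain ⟨Z, hZdef⟩ : ∃ x, x = j + R * m₀ - 2 * Q := ⟨_, rfl⟩
  have hZX : Z + 2 * Q = j + R * m₀ := by omega
  obtain ⟨qq, hqqdef⟩ : ∃ x, x = Z / (8 * Q) := ⟨_, rfl⟩
  obtain ⟨δ₀, hδ₀def⟩ : ∃ x, x = Z % (8 * Q) := ⟨_, rfl⟩
  have hZ : 8 * (Q * qq) + δ₀ = Z := by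
    rw [hqqdef, hδ₀def]
    calc 8 * (Q * (Z / (8 * Q))) + Z % (8 * Q) = 8 * Q * (Z / (8 * Q)) + Z % (8 * Q) := by
          ring_nf
    _ = Z := Nat.div_add_mod Z (8 * Q)
  have hδ₀lt : δ₀ < 8 * Q := by
    rw [hδ₀def]; exact Nat.mod_lt Z (by omega)
  obtain ⟨g, hgdef⟩ : ∃ x, x = δ₀ / (8 * R) := ⟨_, rfl⟩
  obtain ⟨δ', hδ'def⟩ : ∃ x, x = δ₀ % (8 * R) := ⟨_, rfl⟩
  have hδ : 8 * (R * g) + δ' = δ₀ := by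
    rw [hgdef, hδ'def]
    calc 8 * (R * (δ₀ / (8 * R))) + δ₀ % (8 * R) = 8 * R * (δ₀ / (8 * R)) + δ₀ % (8 * R) := by
          ring_nf
    _ = δ₀ := Nat.div_add_mod δ₀ (8 * R)
  have hδ'lt : δ' < 8 * R := by
    rw [hδ'def]; exact Nat.mod_lt δ₀ (by omega)
  have hgle : g ≤ QR := by
    have h2 : R * g < R * QR := by omega
    by_contra hcon
    push_neg at hcon
    have : R * QR ≤ R * g := Nat.mul_le_mul_left R (le_of_lt hcon)
    omega
  obtain ⟨s, hsdef⟩ : ∃ x, x = QR - g := ⟨_, rfl⟩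
  have hsg : s + g = QR := by omega
  have hP2P4 : R * s + R * g = Q := by
    calc R * s + R * g = R * (s + g) := by ring
    _ = R * QR := by rw [hsg]
    _ = Q := hQR
  obtain ⟨t, htdef⟩ : ∃ x, x = qq + 1 := ⟨_, rfl⟩
  have hQt : Q * (8 * t + 2) = 8 * (Q * qq) + 10 * Q := by rw [htdef]; ring
  have hkey : j + (R * m₀ + 8 * (R * s)) = Q * (8 * t + 2) + δ' := by omega
  have hsQR : s ≤ QR := by omega
  have h8s : 8 * (R * s) ≤ 8 * Q := by
    have : R * s ≤ R * QR := Nat.mul_le_mul_left R hsQR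
    omega
  have harith : ∀ e : ℕ, e ≤ 2 →
      Q * (8 * t + 2) ≤ j + R * (m₀ + 8 * s + 8 * e) ∧
      j + R * (m₀ + 8 * s + 8 * e) + (m₀ + 8 * s + 8 * e) ≤ Q * (8 * t + 2) + 3 * Q ∧
      M ≤ (m₀ + 8 * s + 8 * e) + 8 * QR + 33 ∧ (m₀ + 8 * s + 8 * e) + 2 ≤ M := by
    intro e he
    have hexp : R * (m₀ + 8 * s + 8 * e) = R * m₀ + 8 * (R * s) + 8 * (R * e) := by ring
    have hRe : R * e ≤ 2 * R := by
      have := Nat.mul_le_mul_left R he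
      omega
    have h8sm : 8 * s ≤ 8 * QR := by omega
    refine ⟨?_, ?_, by omega, by omega⟩
    · rw [hexp]; omega
    · rw [hexp]; omega
  obtain ⟨ub, hubdef⟩ : ∃ x, x = u₀ + s := ⟨_, rfl⟩
  rw [← hQRdef]
  by_cases h0 : sg (t + ub) ≠ sg t
  · obtain ⟨ha, hb, hc, hd⟩ := harith 0 (by omega)
    exact ⟨m₀ + 8 * s + 8 * 0, ub, t, by omega, by omega, by omega, h0, ha, hb⟩
  · by_cases h1 : sg (t + (ub + 1)) ≠ sg t
    · obtain ⟨ha, hb, hc, hd⟩ := harith 1 (by omega)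
      exact ⟨m₀ + 8 * s + 8 * 1, ub + 1, t, by omega, by omega, by omega, h1, ha, hb⟩
    · by_cases h2 : sg (t + (ub + 2)) ≠ sg t
      · obtain ⟨ha, hb, hc, hd⟩ := harith 2 (by omega)
        exact ⟨m₀ + 8 * s + 8 * 2, ub + 2, t, by omega, by omega, by omega, h2, ha, hb⟩
      · exfalso
        push_neg at h0 h1 h2
        apply no_triple (t + ub)
        constructor
        · rw [show t + ub + 1 = t + (ub + 1) by ring, h0, h1]
        · rw [show t + ub + 1 = t + (ub + 1) by ring,
            show t + ub + 2 = t + (ub + 2) by ring, h1, h2]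

/-- Eventual lower bound for `GammaJ`, in natural-number form, with `R = 2^ρ`. -/
lemma gamma_lower (j ρ : ℕ) (hρ : 6 ≤ ρ) :
    ∀ k ≥ 64 * 2 ^ ρ, 3 * (2 ^ ρ) * k ≤ 2 * (2 ^ ρ) * (GammaJ j k) + 16 * k
      + 60 * (2 ^ ρ) * (2 ^ ρ) + 72 * (2 ^ ρ) := by
  intro k hk
  obtain ⟨R, hRdef⟩ : ∃ x, x = 2 ^ ρ := ⟨_, rfl⟩
  rw [← hRdef] at hk ⊢
  have hR64 : 64 ≤ R := by
    rw [hRdef]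
    calc 64 = 2 ^ 6 := by norm_num
    _ ≤ 2 ^ ρ := Nat.pow_le_pow_right (by norm_num) hρ
  have hkpos : k - R - 2 ≠ 0 := by omega
  obtain ⟨v, hvdef⟩ : ∃ x, x = Nat.log 2 (k - R - 2) := ⟨_, rfl⟩
  have hv1 : 2 ^ v ≤ k - R - 2 := by rw [hvdef]; exact Nat.pow_log_le_self 2 hkpos
  have hv2 : k - R - 2 < 2 ^ (v + 1) := by
    rw [hvdef]; exact Nat.lt_pow_succ_log_self (by norm_num) _
  obtain ⟨Q, hQdef⟩ : ∃ x, x = 2 ^ v := ⟨_, rfl⟩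
  have hQ1 : Q ≤ k - R - 2 := hQdef ▸ hv1
  have hQ2 : k - R - 2 < 2 * Q := by
    have : (2:ℕ) ^ (v + 1) = 2 * 2 ^ v := by ring
    omega
  have hρv : ρ ≤ v := by
    have h1 : (2:ℕ) ^ ρ ≤ 2 ^ (v + 1) := by omega
    by_contra hcon
    push_neg at hcon
    have : (2:ℕ) ^ (v + 1) ≤ 2 ^ ρ := Nat.pow_le_pow_right (by norm_num) (by omega)
    have h3 : (2:ℕ) ^ v < 2 ^ ρ := by
      have := Nat.pow_lt_pow_right (a := 2) (by norm_num) (show v < ρ by omega)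
      exact this
    omega
  have hRd : R ∣ 2 ^ v := hRdef ▸ pow_dvd_pow 2 hρv
  have hQbig : 30 * R < Q := by omega
  -- M
  obtain ⟨M, hMdef⟩ : ∃ x, x = min (3 * Q - 24 * R) (3 * k / 2) := ⟨_, rfl⟩
  have hM1 : M + 24 * R ≤ 3 * 2 ^ v := by
    have : M ≤ 3 * Q - 24 * R := by rw [hMdef]; exact min_le_left _ _
    omega
  have hM2 : 2 ^ v ≤ M := by
    have ha : Q ≤ 3 * Q - 24 * R := by omega
    have hb : Q ≤ 3 * k / 2 := by omega
    rw [hMdef, ← hQdef]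
    exact le_min ha hb
  obtain ⟨m, u, t, hm, hmM, hmM2, hσ, h1, h2⟩ := select j v R M hR64 hRd hM1 hM2
  have hblocks : tmBlock j m R = tmBlock j m (R + 2 ^ v) :=
    blocks_eq_core j v m t u R hm hσ h1 h2
  have hnot : ¬ IsAntipowerJfix j k m := by
    apply not_anti_of j m R (R + 2 ^ v) k (by omega) _ hblocks
    omega
  have hodd : Odd m := ⟨4 * u, by omega⟩
  have hmem : m ∈ {x : ℕ | Odd x ∧ ¬ IsAntipowerJfix j k x} := ⟨hodd, hnot⟩
  have hbdd : BddAbove {x : ℕ | Odd x ∧ ¬ IsAntipowerJfix j k x} :=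
    ⟨3 * k, fun x hx => mem_S_le j k x hx⟩
  have hmΓ : m ≤ GammaJ j k := le_csSup hbdd hmem
  obtain ⟨Γ, hΓdef⟩ : ∃ x, x = GammaJ j k := ⟨_, rfl⟩
  rw [← hΓdef]
  have hmΓ' : m ≤ Γ := hΓdef ▸ hmΓ
  obtain ⟨F, hFdef⟩ : ∃ x, x = 2 ^ v / R := ⟨_, rfl⟩
  have hF : R * F = Q := by
    rw [hFdef, ← hQdef]
    exact Nat.mul_div_cancel' (hQdef ▸ hRd) -- R * (Q / R) = Q
  have hmM' : M ≤ m + 8 * F + 33 := by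
    rw [hFdef]; exact hmM
  have hΓm : 2 * (R * m) ≤ 2 * (R * Γ) := by
    have := Nat.mul_le_mul_left R hmΓ'
    omega
  have hQk : Q ≤ k := by omega
  -- goal : 3 * R * k ≤ 2 * R * Γ + 16 * k + 60 * R * R + 72 * R
  rcases le_or_gt (3 * k / 2) (3 * Q - 24 * R) with hcase | hcase
  · -- M = 3k/2
    have hMk : 3 * k / 2 ≤ m + 8 * F + 33 := by
      have : M = 3 * k / 2 := by rw [hMdef]; exact min_eq_right hcase
      omega
    have step1 : R * (3 * k / 2) ≤ R * m + 8 * (R * F) + 33 * R := by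
      calc R * (3 * k / 2) ≤ R * (m + 8 * F + 33) := Nat.mul_le_mul_left R hMk
      _ = R * m + 8 * (R * F) + 33 * R := by ring
    have h3k : 3 * k ≤ 2 * (3 * k / 2) + 1 := by omega
    have step2 : R * (3 * k) ≤ 2 * (R * (3 * k / 2)) + R := by
      calc R * (3 * k) ≤ R * (2 * (3 * k / 2) + 1) := Nat.mul_le_mul_left R h3k
      _ = 2 * (R * (3 * k / 2)) + R := by ring
    have hgoal : 3 * (R * k) ≤ 2 * (R * Γ) + 16 * (R * F) + 67 * R := by
      have e : R * (3 * k) = 3 * (R * k) := by ring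
      omega
    have hRF : 16 * (R * F) ≤ 16 * k := by omega
    calc 3 * R * k = 3 * (R * k) := by ring
    _ ≤ 2 * (R * Γ) + 16 * (R * F) + 67 * R := hgoal
    _ ≤ 2 * (R * Γ) + 16 * k + 67 * R := by omega
    _ = 2 * R * Γ + 16 * k + 67 * R := by ring
    _ ≤ 2 * R * Γ + 16 * k + 60 * R * R + 72 * R := by omega
  · -- M = 3Q - 24R
    have hMQ : M = 3 * Q - 24 * R := by rw [hMdef]; exact min_eq_left (le_of_lt hcase)
    have hMk : 3 * Q ≤ m + 8 * F + 33 + 24 * R := by omega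
    have step1 : R * (3 * Q) ≤ R * m + 8 * (R * F) + 33 * R + 24 * (R * R) := by
      calc R * (3 * Q) ≤ R * (m + 8 * F + 33 + 24 * R) := Nat.mul_le_mul_left R hMk
      _ = R * m + 8 * (R * F) + 33 * R + 24 * (R * R) := by ring
    -- 3k ≤ 6Q + 3R + 6
    have h3k : 3 * k ≤ 6 * Q + 3 * R + 6 := by omega
    have step2 : R * (3 * k) ≤ 2 * (R * (3 * Q)) + 3 * (R * R) + 6 * R := by
      calc R * (3 * k) ≤ R * (6 * Q + 3 * R + 6) := Nat.mul_le_mul_left R h3k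
      _ = 2 * (R * (3 * Q)) + 3 * (R * R) + 6 * R := by ring
    have hRF : 16 * (R * F) ≤ 16 * k := by omega
    have e : R * (3 * k) = 3 * (R * k) := by ring
    calc 3 * R * k = 3 * (R * k) := by ring
    _ ≤ 2 * (R * Γ) + 16 * (R * F) + 66 * R + 48 * (R * R) + 3 * (R * R) + 6 * R := by omega
    _ ≤ 2 * R * Γ + 16 * k + 60 * R * R + 72 * R := by
        have : 2 * (R * Γ) = 2 * R * Γ := by ring
        have : 51 * (R * R) ≤ 60 * (R * R) := by omega
        have e2 : 60 * (R * R) = 60 * R * R := by ring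
        omega

open Filter
theorem Gamma_liminf_eq_three_halves (j : ℕ) :
    Filter.liminf (fun k : ℕ => (GammaJ j k : ℝ) / k) Filter.atTop = 3 / 2 := by
  set f : ℕ → ℝ := fun k => (GammaJ j k : ℝ) / k with hf
  have hf0 : ∀ k, 0 ≤ f k := fun k => by positivity
  have hf3 : ∀ k, f k ≤ 3 := by
    intro k
    rcases Nat.eq_zero_or_pos k with h0 | hk
    · simp [hf, h0]
    · have h := GammaJ_le j k
      have hkR : (0:ℝ) < k := by exact_mod_cast hk
      rw [hf]
      rw [div_le_iff₀ hkR]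
      calc (GammaJ j k : ℝ) ≤ 3 * k := by exact_mod_cast h
      _ = 3 * k := rfl
  have hbdd_ge : IsBoundedUnder (· ≥ ·) atTop f := isBoundedUnder_of ⟨0, fun k => hf0 k⟩
  have hbdd_le : IsBoundedUnder (· ≤ ·) atTop f := isBoundedUnder_of ⟨3, fun k => hf3 k⟩
  -- upper: frequently f ≤ 3/2 along powers of two
  have hfreq : ∃ᶠ k in atTop, f k ≤ 3 / 2 := by
    rw [frequently_atTop]
    intro N
    refine ⟨2 ^ (N + 1), ?_, ?_⟩
    · have := Nat.lt_two_pow_self (n := N)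
      have h2 : (2:ℕ) ^ N ≤ 2 ^ (N + 1) := Nat.pow_le_pow_right (by norm_num) (by omega)
      omega
    · have h := GammaJ_le_pow j N
      have hpos : (0:ℝ) < (2 ^ (N + 1) : ℕ) := by positivity
      rw [hf]
      rw [div_le_iff₀ hpos]
      calc (GammaJ j (2 ^ (N + 1)) : ℝ) ≤ 3 * 2 ^ N := by exact_mod_cast h
      _ ≤ 3 / 2 * (2 ^ (N + 1) : ℕ) := by
          push_cast
          rw [pow_succ]
          ring_nf
          linarith
  have hupper : liminf f atTop ≤ 3 / 2 := liminf_le_of_frequently_le hfreq hbdd_ge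
  -- lower
  have hev : ∀ ε : ℝ, 0 < ε → ∀ᶠ k in atTop, 3 / 2 - ε ≤ f k := by
    intro ε hε
    obtain ⟨ρ₀, hρ₀⟩ := pow_unbounded_of_one_lt (16 / ε) (by norm_num : (1:ℝ) < 2)
    set ρ := max 6 ρ₀ with hρdef
    set R : ℕ := 2 ^ ρ with hRdef
    have hRpos : (0:ℝ) < R := by positivity
    have hεR : 16 ≤ ε * R := by
      have h1 : (16:ℝ) / ε < 2 ^ ρ₀ := hρ₀
      have h2 : (2:ℝ) ^ ρ₀ ≤ 2 ^ ρ := by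
        apply pow_le_pow_right₀ (by norm_num)
        exact le_max_right _ _
      have h3 : (16:ℝ) / ε < R := by
        rw [hRdef]
        push_cast
        linarith
      rw [div_lt_iff₀ hε] at h3
      linarith [mul_comm ε (R:ℝ)]
    set N := max (64 * R) (Nat.ceil ((60 * (R:ℝ) + 72) / ε) + 1) with hN
    rw [eventually_atTop]
    refine ⟨N, fun k hk => ?_⟩
    have hk1 : 64 * R ≤ k := le_trans (le_max_left _ _) hk
    have hkpos : 0 < k := by
      have : 0 < 64 * R := by positivity
      omega
    have hkR : (0:ℝ) < k := by exact_mod_cast hkpos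
    have hεk : 60 * (R:ℝ) + 72 ≤ ε * k := by
      have h1 : Nat.ceil ((60 * (R:ℝ) + 72) / ε) + 1 ≤ k := le_trans (le_max_right _ _) hk
      have h2 : (60 * (R:ℝ) + 72) / ε ≤ Nat.ceil ((60 * (R:ℝ) + 72) / ε) := Nat.le_ceil _
      have h3 : ((Nat.ceil ((60 * (R:ℝ) + 72) / ε) : ℕ) : ℝ) + 1 ≤ k := by
        exact_mod_cast h1
      rw [div_le_iff₀ hε] at h2
      have := mul_comm ε (k:ℝ)
      nlinarith
    have hnat := gamma_lower j ρ (le_max_left _ _) k hk1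
    have hcast : 3 * (R:ℝ) * k ≤ 2 * R * (GammaJ j k) + 16 * k + 60 * R * R + 72 * R := by
      exact_mod_cast hnat
    have hgoal : (3 / 2 - ε) * k ≤ (GammaJ j k : ℝ) := by
      have key : 2 * (R:ℝ) * ((3 / 2 - ε) * k) ≤ 2 * R * (GammaJ j k) := by
        have e1 : 16 * (k:ℝ) ≤ ε * R * k := by
          nlinarith
        have e2 : 60 * (R:ℝ) * R + 72 * R ≤ ε * k * R := by
          nlinarith
        nlinarith
      nlinarith
    rw [hf]
    rw [le_div_iff₀ hkR]
    linarith [mul_comm ((3:ℝ)/2 - ε) (k:ℝ)]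
  have hlower : 3 / 2 ≤ liminf f atTop := by
    apply le_of_forall_sub_le
    intro ε hε
    exact le_liminf_of_le hbdd_le.isCoboundedUnder_flip (hev ε hε)
  linarith
end
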